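/- Let D be a weakly Krull GCD-domain and let G be a torsion-free abelian group satisfying the ACC on cyclic subgroups. Then D is G-UMT. -/

import Mathlib

/-!
Since `G` is torsion-free it has unique sums, so `(D ⧸ P)[G]` is a domain and `P[G]`, the kernel
of `D[G] → (D ⧸ P)[G]`, is prime. For minimality, let `Q ⊊ P[G]` be prime and `0 ≠ f ∈ Q`. Pulling
out the gcd of the coefficients writes `f = d • g` with `g` primitive. If `d ∈ Q`, then `Q ∩ D` is a
nonzero prime inside the height-one prime `P`, hence equal to `P`, which forces `P[G] ⊆ Q`.
Otherwise `g ∈ P[G]`, which is impossible: a height-one prime is minimal over each nonzero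
principal ideal it contains, so it contains no two coprime elements, and hence it contains the gcd
of any finitely many of its elements.
-/

/-! ### Basic notions for monoids, monoid algebras and domains -/

/-- A monoid `S` (written additively) is torsion-free if `n • x = n • y` implies `x = y`
for all integers `n ≥ 1`. -/
def AddTorsionFree (S : Type*) [AddCommMonoid S] : Prop :=
  ∀ n : ℕ, n ≠ 0 → ∀ x y : S, n • x = n • y → x = y

/-- An ideal of an additive monoid `S` is a nonempty subset `P` with `P + S ⊆ P`. -/
def IsMonoidIdeal {S : Type*} [AddCommMonoid S] (P : Set S) : Prop :=
  P.Nonempty ∧ ∀ p ∈ P, ∀ s : S, p + s ∈ P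

/-- An ideal `P` of an additive monoid `S` is prime if `P ≠ S` and
`s + t ∈ P` implies `s ∈ P` or `t ∈ P`. -/
def IsMonoidPrimeIdeal {S : Type*} [AddCommMonoid S] (P : Set S) : Prop :=
  IsMonoidIdeal P ∧ P ≠ Set.univ ∧ ∀ s t : S, s + t ∈ P → s ∈ P ∨ t ∈ P

/-- `P ∈ 𝔛(S)`: `P` is a minimal nonempty prime ideal of the monoid `S`. -/
def IsMinMonoidPrime {S : Type*} [AddCommMonoid S] (P : Set S) : Prop :=
  IsMonoidPrimeIdeal P ∧ ∀ Q : Set S, IsMonoidPrimeIdeal Q → Q ⊆ P → Q = P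

/-- `P ∈ 𝔛(R)`: `P` is a height-one prime ideal of `R`, i.e. a nonzero prime ideal
that is minimal among the nonzero prime ideals. -/
def IsHeightOnePrime {R : Type*} [CommRing R] (P : Ideal R) : Prop :=
  P.IsPrime ∧ P ≠ ⊥ ∧ ∀ Q : Ideal R, Q.IsPrime → Q < P → Q = ⊥

/-- `D[P]` for a subset `P ⊆ S`: the set of elements of the monoid algebra `D[S]`
all of whose exponents lie in `P`. -/
def expIn (D : Type*) {S : Type*} [CommRing D] [AddCommMonoid S] (P : Set S) :
    Set (AddMonoidAlgebra D S) :=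
  {f | ∀ s ∈ f.coeff.support, s ∈ P}

/-- `I[S]` for an ideal `I` of `D`: the set of elements of the monoid algebra `D[S]`
all of whose coefficients lie in `I`. -/
def coeffIn {D : Type*} (S : Type*) [CommRing D] [AddCommMonoid S] (I : Ideal D) :
    Set (AddMonoidAlgebra D S) :=
  {f | ∀ s : S, f.coeff s ∈ I}

/-- `φ : S →+ G` realizes `G` as the quotient (Grothendieck) group of `S`:
`φ` is injective and every element of `G` is a difference of elements of `φ(S)`. -/
def IsQuotientGroup {S G : Type*} [AddCommMonoid S] [AddCommGroup G] (φ : S →+ G) : Prop :=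
  Function.Injective φ ∧ ∀ g : G, ∃ s t : S, g = φ s - φ t

/-- A subgroup is cyclic if it is generated by a single element. -/
def IsCyclicAddSubgroup {G : Type*} [AddCommGroup G] (H : AddSubgroup G) : Prop :=
  ∃ g : G, H = AddSubgroup.closure {g}

/-- `G` satisfies the ACC on cyclic subgroups: every ascending chain of cyclic
subgroups of `G` stabilizes. -/
def ACCOnCyclicSubgroups (G : Type*) [AddCommGroup G] : Prop :=
  ∀ c : ℕ →o AddSubgroup G, (∀ n, IsCyclicAddSubgroup (c n)) →
    ∃ N, ∀ n, N ≤ n → c n = c N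

/-- `D` is `S`-UMT: `P[S] ∈ 𝔛(D[S])` for every `P ∈ 𝔛(D)`. -/
def IsDomainUMT (D S : Type*) [CommRing D] [AddCommMonoid S] : Prop :=
  ∀ P : Ideal D, IsHeightOnePrime P →
    ∃ Q : Ideal (AddMonoidAlgebra D S), (Q : Set (AddMonoidAlgebra D S)) = coeffIn S P ∧
      IsHeightOnePrime Q

/-- `S` is `D`-UMT: `D[P] ∈ 𝔛(D[S])` for every `P ∈ 𝔛(S)`. -/
def IsMonoidUMT (D S : Type*) [CommRing D] [AddCommMonoid S] : Prop :=
  ∀ P : Set S, IsMinMonoidPrime P →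
    ∃ Q : Ideal (AddMonoidAlgebra D S), (Q : Set (AddMonoidAlgebra D S)) = expIn D P ∧
      IsHeightOnePrime Q

/-- The localization `R_P` of `R` at a prime ideal `P`, as a subset of the fraction
field of `R`. -/
def locAt {R : Type*} [CommRing R] (P : Ideal R) : Set (FractionRing R) :=
  {x | ∃ a b : R, b ∉ P ∧
    x * algebraMap R (FractionRing R) b = algebraMap R (FractionRing R) a}

/-- A domain `R` is weakly Krull if `R = ⋂_{P ∈ 𝔛(R)} R_P` inside its quotient field and
every nonzero nonunit of `R` lies in only finitely many height-one primes. -/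
def IsWeaklyKrullDomain (R : Type*) [CommRing R] : Prop :=
  (∀ x : FractionRing R, (∀ P : Ideal R, IsHeightOnePrime P → x ∈ locAt P) →
      ∃ r : R, x = algebraMap R (FractionRing R) r) ∧
  ∀ r : R, r ≠ 0 → ¬IsUnit r → {P : Ideal R | IsHeightOnePrime P ∧ r ∈ P}.Finite

/-- The localization `S_P = {s - t : s ∈ S, t ∈ S ∖ P}` of the monoid `S` at `P`,
inside the quotient group of `S` realized by `φ`. -/
def monLocAt {S G : Type*} [AddCommMonoid S] [AddCommGroup G] (φ : S →+ G) (P : Set S) :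
    Set G :=
  {g | ∃ s t : S, t ∉ P ∧ g = φ s - φ t}

/-- A monoid `S` is weakly Krull if `S = ⋂_{P ∈ 𝔛(S)} S_P` inside its quotient group and
every nonunit of `S` lies in only finitely many minimal nonempty primes. -/
def IsWeaklyKrullMonoid {S G : Type*} [AddCommMonoid S] [AddCommGroup G] (φ : S →+ G) :
    Prop :=
  (∀ g : G, (∀ P : Set S, IsMinMonoidPrime P → g ∈ monLocAt φ P) → ∃ s : S, g = φ s) ∧
  ∀ s : S, ¬IsAddUnit s → {P : Set S | IsMinMonoidPrime P ∧ s ∈ P}.Finite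

/-- A Krull domain: a weakly Krull domain each of whose localizations at height-one
primes is a discrete rank-one valuation ring, i.e. the ring of nonnegative elements of a
`ℤ`-valued valuation on the quotient field. -/
def IsKrullDomain (R : Type*) [CommRing R] : Prop :=
  IsWeaklyKrullDomain R ∧
  ∀ P : Ideal R, IsHeightOnePrime P →
    ∃ v : (FractionRing R)ˣ →* Multiplicative ℤ,
      ∀ x : (FractionRing R)ˣ, ((x : FractionRing R) ∈ locAt P ↔ 0 ≤ Multiplicative.toAdd (v x))

/-- A Krull monoid: a weakly Krull monoid such that for each `P ∈ 𝔛(S)` there is a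
group homomorphism `v : q(S) → ℤ` with `S_P = {x : v x ≥ 0}`. -/
def IsKrullMonoid {S G : Type*} [AddCommMonoid S] [AddCommGroup G] (φ : S →+ G) : Prop :=
  IsWeaklyKrullMonoid φ ∧
  ∀ P : Set S, IsMinMonoidPrime P →
    ∃ v : G →+ ℤ, ∀ g : G, g ∈ monLocAt φ P ↔ 0 ≤ v g

/-- A generalized Krull domain: a weakly Krull domain each of whose localizations `R_P`
at height-one primes is a valuation domain: every `x` in the quotient field satisfies
`x ∈ R_P` or `x⁻¹ ∈ R_P`. -/
def IsGeneralizedKrullDomain (R : Type*) [CommRing R] : Prop :=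
  IsWeaklyKrullDomain R ∧
  ∀ P : Ideal R, IsHeightOnePrime P →
    ∀ x : FractionRing R, x ∈ locAt P ∨ ∃ y ∈ locAt P, x * y = 1

/-- A generalized Krull monoid: a weakly Krull monoid each of whose localizations `S_P`
at minimal primes is a valuation monoid of `q(S)`: `g ∈ S_P` or `-g ∈ S_P` for all `g`. -/
def IsGeneralizedKrullMonoid {S G : Type*} [AddCommMonoid S] [AddCommGroup G]
    (φ : S →+ G) : Prop :=
  IsWeaklyKrullMonoid φ ∧
  ∀ P : Set S, IsMinMonoidPrime P → ∀ g : G, g ∈ monLocAt φ P ∨ -g ∈ monLocAt φ P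

/-! ### The `t`-operation and UMT-domains -/

/-- For a subset `A` of the quotient field of `R`, the set
`A⁻¹ = {x : x • A ⊆ R}` inside the quotient field. -/
def setInv {R : Type*} [CommRing R] (A : Set (FractionRing R)) : Set (FractionRing R) :=
  {x | ∀ a ∈ A, ∃ r : R, x * a = algebraMap R (FractionRing R) r}

/-- `I_v = (I⁻¹)⁻¹` for an ideal `I` of `R`, as a subset of the quotient field. -/
def idealV {R : Type*} [CommRing R] (I : Ideal R) : Set (FractionRing R) :=
  setInv (setInv (algebraMap R (FractionRing R) '' (I : Set R)))

/-- `I` is a `t`-ideal: `I_t = I`, i.e. `J_v ⊆ I` for every nonzero finitely generated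
ideal `J ⊆ I` (the inclusion `I ⊆ I_t` always holds). -/
def IsTIdeal {R : Type*} [CommRing R] (I : Ideal R) : Prop :=
  ∀ J : Ideal R, J ≤ I → J.FG → J ≠ ⊥ →
    idealV J ⊆ algebraMap R (FractionRing R) '' (I : Set R)

/-- A maximal `t`-ideal: an ideal maximal among proper `t`-ideals. -/
def IsMaximalTIdeal {R : Type*} [CommRing R] (I : Ideal R) : Prop :=
  I ≠ ⊤ ∧ IsTIdeal I ∧ ∀ J : Ideal R, J ≠ ⊤ → IsTIdeal J → I ≤ J → I = J

/-- A UMT-domain: every (nonzero) prime ideal of `D[X]` contracting to `(0)` in `D`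
(an "upper to zero") is a maximal `t`-ideal of `D[X]`. -/
def IsUMTDomain (D : Type*) [CommRing D] : Prop :=
  ∀ Q : Ideal (Polynomial D), Q.IsPrime → Q ≠ ⊥ →
    Q.comap (Polynomial.C : D →+* Polynomial D) = ⊥ → IsMaximalTIdeal Q

/-! ### GCD, primary elements, weak factoriality -/

/-- A GCD-domain: any two nonzero elements have a greatest common divisor. -/
def IsGCDDomain (R : Type*) [CommRing R] : Prop :=
  ∀ a b : R, a ≠ 0 → b ≠ 0 →
    ∃ d : R, d ∣ a ∧ d ∣ b ∧ ∀ e : R, e ∣ a → e ∣ b → e ∣ d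

/-- Divisibility in an additive monoid: `a ∣ b ↔ b ∈ a + S`. -/
def AddDvd {S : Type*} [AddCommMonoid S] (a b : S) : Prop := ∃ c : S, b = a + c

/-- A GCD-monoid: any two elements have a greatest common divisor with respect to
the divisibility preorder. -/
def IsGCDAddMonoid (S : Type*) [AddCommMonoid S] : Prop :=
  ∀ a b : S, ∃ d : S, AddDvd d a ∧ AddDvd d b ∧ ∀ e : S, AddDvd e a → AddDvd e b → AddDvd e d

/-- A primary element of a ring: the principal ideal it generates is primary. -/
def IsPrimaryElem {R : Type*} [CommRing R] (a : R) : Prop :=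
  (Ideal.span {a} : Ideal R).IsPrimary

/-- A weakly factorial domain: every nonzero nonunit is a finite product of
primary elements. -/
def IsWeaklyFactorialDomain (R : Type*) [CommRing R] : Prop :=
  ∀ a : R, a ≠ 0 → ¬IsUnit a →
    ∃ l : List R, (∀ b ∈ l, IsPrimaryElem b) ∧ a = l.prod

/-- A primary ideal of an additive monoid: an ideal `Q ≠ S` such that `s + t ∈ Q`
with `s ∉ Q` implies `n • t ∈ Q` for some `n ≥ 1`. -/
def IsMonoidPrimaryIdeal {S : Type*} [AddCommMonoid S] (Q : Set S) : Prop :=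
  IsMonoidIdeal Q ∧ Q ≠ Set.univ ∧
    ∀ s t : S, s + t ∈ Q → s ∉ Q → ∃ n : ℕ, 1 ≤ n ∧ n • t ∈ Q

/-- A primary element of an additive monoid: the ideal `a + S` is primary. -/
def IsMonoidPrimaryElem {S : Type*} [AddCommMonoid S] (a : S) : Prop :=
  IsMonoidPrimaryIdeal {x : S | ∃ s : S, x = a + s}

/-- A weakly factorial monoid: every nonunit is a finite sum of primary elements. -/
def IsWeaklyFactorialMonoid (S : Type*) [AddCommMonoid S] : Prop :=
  ∀ a : S, ¬IsAddUnit a →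
    ∃ l : List S, (∀ b ∈ l, IsMonoidPrimaryElem b) ∧ a = l.sum

/-! ### The canonical inclusions `D[S] → K[S]` and `D[S] → D[G]` -/

/-- The canonical inclusion `D[S] → K[S]`, where `K` is the fraction field of `D`,
applying `D → K` to all coefficients. -/
noncomputable def coeffEmbed (D S : Type*) [CommRing D] [IsDomain D] [AddCommMonoid S] :
    AddMonoidAlgebra D S →+* AddMonoidAlgebra (FractionRing D) S :=
  AddMonoidAlgebra.liftNCRingHom
    ((AddMonoidAlgebra.singleZeroRingHom).comp (algebraMap D (FractionRing D)))
    (AddMonoidAlgebra.of (FractionRing D) S) (fun {_ _} => Commute.all _ _)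

/-- The canonical inclusion `D[S] → D[G]`, where `G` is the quotient group of `S`
realized by `φ`, applying `φ` to all exponents. -/
noncomputable def expEmbed (D : Type*) {S G : Type*} [CommRing D] [AddCommMonoid S]
    [AddCommGroup G] (φ : S →+ G) : AddMonoidAlgebra D S →+* AddMonoidAlgebra D G :=
  AddMonoidAlgebra.mapDomainRingHom D φ

theorem IsGCDDomain.isGCDMonoid {R : Type*} [CommRing R] [IsDomain R]
    (h : IsGCDDomain R) : IsGCDMonoid R := by
  classical
  refine ⟨gcdMonoidOfExistsGCD fun a b => ?_⟩
  by_cases ha : a = 0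
  · exact ⟨b, fun e => by simp [ha]⟩
  by_cases hb : b = 0
  · exact ⟨a, fun e => by simp [hb]⟩
  obtain ⟨d, hda, hdb, hgcd⟩ := h a b ha hb
  exact ⟨d, fun e => ⟨fun he => hgcd e he.1 he.2, fun he => ⟨he.trans hda, he.trans hdb⟩⟩⟩

theorem AddTorsionFree.isAddTorsionFree {G : Type*} [AddCommMonoid G] (hG : AddTorsionFree G) :
    IsAddTorsionFree G :=
  ⟨fun n hn x y h => hG n hn x y h⟩

/-- `G` embeds into the `ℚ`-vector space `G` localized at `ℤ ∖ {0}`. -/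
instance twoUniqueSums_of_isAddTorsionFree {G : Type*} [AddCommGroup G] [IsAddTorsionFree G] :
    TwoUniqueSums G := by
  let _ : Module ℚ (LocalizedModule (nonZeroDivisors ℤ) G) :=
    Module.compHom _ (FractionRing.algEquiv ℤ ℚ).symm.toRingEquiv.toRingHom
  have hinj : Function.Injective (LocalizedModule.mkLinearMap (nonZeroDivisors ℤ) G) :=
    fun m m' h => by
      obtain ⟨c, hc⟩ := LocalizedModule.mk_eq.1 h
      exact (IsRegular.of_ne_zero (nonZeroDivisors.coe_ne_zero c)).isSMulRegular
        (by simpa [Submonoid.smul_def] using hc)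
  exact TwoUniqueSums.of_injective_addHom
    (LocalizedModule.mkLinearMap (nonZeroDivisors ℤ) G).toAddMonoidHom.toAddHom hinj inferInstance

section GCD

variable {α : Type*} [CommMonoidWithZero α] [GCDMonoid α]

theorem exists_finset_gcd_mem {ι : Type*} {T : Set α} (h0 : 0 ∈ T)
    (hT : ∀ a ∈ T, ∀ b ∈ T, gcd a b ∈ T) (s : Finset ι) {c : ι → α} (hc : ∀ i ∈ s, c i ∈ T) :
    ∃ d ∈ T, ∀ e, e ∣ d ↔ ∀ i ∈ s, e ∣ c i := by
  classical
  induction s using Finset.induction_on with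
  | empty => exact ⟨0, h0, by simp⟩
  | insert i s _ ih =>
    obtain ⟨d, hdT, hd⟩ := ih fun j hj => hc j (Finset.mem_insert_of_mem hj)
    refine ⟨gcd (c i) d, hT _ (hc i (Finset.mem_insert_self i s)) _ hdT, fun e => ?_⟩
    rw [dvd_gcd_iff, hd, Finset.forall_mem_insert]

theorem exists_finsupp_gcd_mem {ι : Type*} {T : Set α} (h0 : 0 ∈ T)
    (hT : ∀ a ∈ T, ∀ b ∈ T, gcd a b ∈ T) (f : ι →₀ α) (hf : ∀ i, f i ∈ T) :
    ∃ d ∈ T, ∀ e, e ∣ d ↔ ∀ i, e ∣ f i := by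
  obtain ⟨d, hdT, hd⟩ := exists_finset_gcd_mem h0 hT f.support fun i _ => hf i
  refine ⟨d, hdT, fun e => (hd e).trans ⟨fun h i => ?_, fun h i _ => h i⟩⟩
  by_cases hi : i ∈ f.support
  · exact h i hi
  · rw [Finsupp.notMem_support_iff.1 hi]
    exact dvd_zero e

end GCD

namespace IsHeightOnePrime

variable {R : Type*} [CommRing R] {P : Ideal R}

theorem eq_of_le (hP : IsHeightOnePrime P) {Q : Ideal R} (hQ : Q.IsPrime) (hQ0 : Q ≠ ⊥)
    (hQP : Q ≤ P) : Q = P := by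
  by_contra hne
  exact hQ0 (hP.2.2 Q hQ (lt_of_le_of_ne hQP hne))

theorem mem_minimalPrimes (hP : IsHeightOnePrime P) {I : Ideal R} (hI : I ≠ ⊥) (hIP : I ≤ P) :
    P ∈ I.minimalPrimes :=
  ⟨⟨hP.1, hIP⟩, fun _ ⟨hQ, hIQ⟩ hQP =>
    (hP.eq_of_le hQ (fun h => hI (le_bot_iff.mp (h ▸ hIQ))) hQP).ge⟩

theorem not_isRelPrime [DecompositionMonoid R] (hP : IsHeightOnePrime P) {a b : R}
    (ha : a ∈ P) (ha0 : a ≠ 0) (hb : b ∈ P) : ¬IsRelPrime a b := by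
  intro hab
  have hmin := hP.mem_minimalPrimes (I := Ideal.span {a})
    (by simpa using ha0) ((Ideal.span_singleton_le_iff_mem P).mpr ha)
  obtain ⟨y, hy, hby⟩ := Ideal.exists_mul_mem_of_mem_minimalPrimes hmin hb
  rw [Ideal.mem_span_singleton] at hy hby
  exact hy (hab.dvd_of_dvd_mul_left hby)

theorem gcd_mem [IsDomain R] [GCDMonoid R] (hP : IsHeightOnePrime P) {a b : R}
    (ha : a ∈ P) (hb : b ∈ P) : gcd a b ∈ P := by
  by_cases ha0 : a = 0
  · subst ha0
    exact P.mem_of_dvd (gcd_zero_left' b).symm.dvd hb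
  obtain ⟨a', b', ha', hb', hunit⟩ := extract_gcd a b
  by_contra hg
  rw [ha'] at ha ha0
  rw [hb'] at hb
  exact hP.not_isRelPrime ((hP.1.mem_or_mem ha).resolve_left hg) (right_ne_zero_of_mul ha0)
    ((hP.1.mem_or_mem hb).resolve_left hg) (gcd_isUnit_iff_isRelPrime.mp hunit)

end IsHeightOnePrime

namespace AddMonoidAlgebra

variable {R S : Type*} [CommRing R] [AddCommMonoid S]

theorem coeffIn_eq_ker (I : Ideal R) :
    coeffIn S I = (RingHom.ker (mapRingHom S (Ideal.Quotient.mk I)) : Set R[S]) := by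
  ext f
  simp [coeffIn, ← coeff_eq_zero, Finsupp.ext_iff, Ideal.Quotient.eq_zero_iff_mem]

theorem coeffIn_subset_of_le_comap {I : Ideal R} {Q : Ideal R[S]}
    (h : I ≤ Q.comap (algebraMap R R[S])) : coeffIn S I ⊆ Q := by
  intro f hf
  rw [← f.sum_coeff_single, Finsupp.sum]
  refine Ideal.sum_mem _ fun s _ => ?_
  rw [← mul_one (f.coeff s), ← smul_single', Algebra.smul_def]
  exact Q.mul_mem_right _ (h (hf s))

def IsPrimitive (f : R[S]) : Prop :=
  ∀ r : R, (∀ s, r ∣ f.coeff s) → IsUnit r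

variable [IsDomain R] [GCDMonoid R]

theorem exists_eq_smul_isPrimitive {f : R[S]} (hf : f ≠ 0) :
    ∃ d : R, d ≠ 0 ∧ ∃ g : R[S], f = d • g ∧ g.IsPrimitive := by
  obtain ⟨d, -, hd⟩ := exists_finsupp_gcd_mem (T := Set.univ) trivial
    (fun _ _ _ _ => trivial) f.coeff fun _ => trivial
  have hd0 : d ≠ 0 := by
    rintro rfl
    exact hf (coeff_eq_zero.1 (Finsupp.ext fun s => zero_dvd_iff.1 ((hd 0).1 dvd_rfl s)))
  choose c hc using (hd d).1 dvd_rfl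
  have hc0 : ∀ s, c s ≠ 0 → f.coeff s ≠ 0 := fun s hs => by
    rw [hc s]
    exact mul_ne_zero hd0 hs
  let g : R[S] := ofCoeff (Finsupp.onFinset f.coeff.support c
    fun s hs => Finsupp.mem_support_iff.2 (hc0 s hs))
  refine ⟨d, hd0, g, ext (Finsupp.ext fun s => ?_), fun e he => ?_⟩
  · simp [g, hc s]
  · have : d * e ∣ d * 1 := by
      rw [mul_one, hd]
      exact fun s => hc s ▸ mul_dvd_mul_left d (he s)
    exact isUnit_of_dvd_one ((mul_dvd_mul_iff_left hd0).1 this)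

theorem IsPrimitive.notMem_coeffIn {P : Ideal R} (hP : IsHeightOnePrime P) {g : R[S]}
    (hg : g.IsPrimitive) : g ∉ coeffIn S P := fun hgP => by
  obtain ⟨d, hdP, hd⟩ := exists_finsupp_gcd_mem P.zero_mem (fun _ ha _ hb => hP.gcd_mem ha hb)
    g.coeff hgP
  exact hP.1.ne_top (P.eq_top_of_isUnit_mem hdP (hg d ((hd d).1 dvd_rfl)))

theorem eq_bot_of_ssubset_coeffIn {P : Ideal R} (hP : IsHeightOnePrime P) {Q : Ideal R[S]}
    (hQ : Q.IsPrime) (hQP : (Q : Set R[S]) ⊂ coeffIn S P) : Q = ⊥ := by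
  by_contra hQ0
  obtain ⟨f, hfQ, hf0⟩ := Submodule.exists_mem_ne_zero_of_ne_bot hQ0
  obtain ⟨d, hd0, g, rfl, hg⟩ := exists_eq_smul_isPrimitive hf0
  rw [Algebra.smul_def] at hfQ
  rcases hQ.mem_or_mem hfQ with hdQ | hgQ
  · have hle : Q.comap (algebraMap R R[S]) ≤ P := fun r hr => by
      simpa using hQP.1 hr 0
    have hcomap := hP.eq_of_le (hQ.comap _) (fun h => hd0 (by rwa [← Ideal.mem_bot, ← h])) hle
    exact hQP.2 (coeffIn_subset_of_le_comap hcomap.ge)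
  · exact hg.notMem_coeffIn hP (hQP.1 hgQ)

theorem isDomainUMT_of_uniqueSums [UniqueSums S] : IsDomainUMT R S := by
  intro P hP
  have : P.IsPrime := hP.1
  refine ⟨RingHom.ker (mapRingHom S (Ideal.Quotient.mk P)), (coeffIn_eq_ker P).symm,
    RingHom.ker_isPrime _, fun hbot => ?_, fun Q hQ hQP => ?_⟩
  · obtain ⟨p, hpP, hp0⟩ := Submodule.exists_mem_ne_zero_of_ne_bot hP.2.1
    have : algebraMap R R[S] p ∈ RingHom.ker (mapRingHom S (Ideal.Quotient.mk P)) := by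
      simp [coe_algebraMap, Ideal.Quotient.eq_zero_iff_mem.2 hpP]
    rw [hbot] at this
    exact hp0 (by simpa using this)
  · rw [← SetLike.coe_ssubset_coe, ← coeffIn_eq_ker] at hQP
    exact eq_bot_of_ssubset_coeffIn hP hQ hQP

end AddMonoidAlgebra

theorem weaklyKrull_gcdDomain_isDomainUMT_general
    {D G : Type*} [CommRing D] [IsDomain D] [AddCommGroup G]
    (hD2 : IsGCDDomain D)
    (hG : AddTorsionFree G) :
    IsDomainUMT D G := by
  obtain ⟨_⟩ := hD2.isGCDMonoid
  have := hG.isAddTorsionFree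
  exact AddMonoidAlgebra.isDomainUMT_of_uniqueSums

/-- Let `D` be a weakly Krull GCD-domain and `G` a torsion-free abelian
group satisfying the ACC on cyclic subgroups. Then `D` is `G`-UMT. -/
theorem weaklyKrull_gcdDomain_isDomainUMT
    {D G : Type*} [CommRing D] [IsDomain D] [AddCommGroup G]
    (hD1 : IsWeaklyKrullDomain D) (hD2 : IsGCDDomain D)
    (hG : AddTorsionFree G) (hacc : ACCOnCyclicSubgroups G) :
    IsDomainUMT D G :=
  weaklyKrull_gcdDomain_isDomainUMT_general hD2 hG
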